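/- arXiv:2108.04386 — 2 statements merged into one kernel-verified Lean document; each statement's English description precedes it below -/
import Mathlib

section
/- (Gluing Lemma, evenness part) Let L₁, L₂ be even lattices with an isometry ψ̄ : (D(L₁), q̄₁) → (D(L₂), q̄₂) of their discriminant quadratic forms. Then the lattice Γ := {(x,y) ∈ L₁∨ ⊕ L₂∨ : ψ̄([x]) = [y]} equipped with the quadratic form q(x,y) := −q₁(x) + q₂(y) is even. -/
def dualSet {V : Type*} [AddCommGroup V] [Module ℚ V]
    (B : V →ₗ[ℚ] V →ₗ[ℚ] ℚ) (L : Submodule ℤ V) : Set V :=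
  {v | v ∈ Submodule.span ℚ (L : Set V) ∧ ∀ x ∈ L, ∃ n : ℤ, B v x = (n : ℚ)}

/-- This is why `q̄` is well defined on `D(L)`: for `l = v - w ∈ L`,
`B v v - B w w = 2 B v l - B l l`. -/
theorem dualSet.exists_apply_self_sub_apply_self_eq_two_mul {V : Type*} [AddCommGroup V]
    [Module ℚ V] {B : V →ₗ[ℚ] V →ₗ[ℚ] ℚ} (hsym : ∀ x y, B x y = B y x) {L : Submodule ℤ V}
    (heven : ∀ x ∈ L, ∃ n : ℤ, B x x = 2 * (n : ℚ)) {v w : V} (hv : v ∈ dualSet B L)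
    (hvw : v - w ∈ L) : ∃ n : ℤ, B v v - B w w = 2 * (n : ℚ) := by
  obtain ⟨m, hm⟩ := hv.2 _ hvw
  obtain ⟨k, hk⟩ := heven _ hvw
  have hw : w = v - (v - w) := (sub_sub_cancel v w).symm
  have hsym' : B (v - w) v = B v (v - w) := hsym _ _
  refine ⟨m - k, ?_⟩
  rw [hw]
  simp only [map_sub, LinearMap.sub_apply] at hm hk hsym' ⊢
  push_cast
  linarith

theorem stmt_4_general (V₁ V₂ : Type*) [AddCommGroup V₁] [Module ℚ V₁]
    [AddCommGroup V₂] [Module ℚ V₂]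
    (B₁ : V₁ →ₗ[ℚ] V₁ →ₗ[ℚ] ℚ) (B₂ : V₂ →ₗ[ℚ] V₂ →ₗ[ℚ] ℚ)
    (hsym₂ : ∀ x y, B₂ x y = B₂ y x)
    (L₁ : Submodule ℤ V₁) (L₂ : Submodule ℤ V₂)
    (heven₂ : ∀ x ∈ L₂, ∃ n : ℤ, B₂ x x = 2 * (n : ℚ))
    (ψ : V₁ → V₂)
    (hψmap : ∀ v ∈ dualSet B₁ L₁, ψ v ∈ dualSet B₂ L₂)
    (hψq : ∀ v ∈ dualSet B₁ L₁, ∃ n : ℤ, B₂ (ψ v) (ψ v) - B₁ v v = 2 * (n : ℚ)) :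
    ∀ x ∈ dualSet B₁ L₁, ∀ y ∈ dualSet B₂ L₂, ψ x - y ∈ L₂ →
      ∃ n : ℤ, -B₁ x x + B₂ y y = 2 * (n : ℚ) := by
  intro x hx y _ hxy
  obtain ⟨n, hn⟩ := hψq x hx
  obtain ⟨m, hm⟩ := dualSet.exists_apply_self_sub_apply_self_eq_two_mul hsym₂ heven₂
    (hψmap x hx) hxy
  exact ⟨n - m, by push_cast; linarith⟩

/-- Gluing Lemma, evenness part: the glued lattice
`Γ = {(x,y) ∈ L₁∨ ⊕ L₂∨ : ψ̄([x]) = [y]}` with form `q(x,y) = -q₁(x) + q₂(y)` is even.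
The isometry `ψ̄ : D(L₁) → D(L₂)` of discriminant forms is encoded by a map `ψ` on dual
vectors which descends to a group isomorphism of the discriminant groups preserving the
discriminant quadratic forms. -/
theorem stmt_4 (V₁ V₂ : Type*) [AddCommGroup V₁] [Module ℚ V₁]
    [AddCommGroup V₂] [Module ℚ V₂]
    (B₁ : V₁ →ₗ[ℚ] V₁ →ₗ[ℚ] ℚ) (B₂ : V₂ →ₗ[ℚ] V₂ →ₗ[ℚ] ℚ)
    (hsym₁ : ∀ x y, B₁ x y = B₁ y x) (hsym₂ : ∀ x y, B₂ x y = B₂ y x)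
    (L₁ : Submodule ℤ V₁) (L₂ : Submodule ℤ V₂)
    (hint₁ : ∀ x ∈ L₁, ∀ y ∈ L₁, ∃ n : ℤ, B₁ x y = (n : ℚ))
    (hint₂ : ∀ x ∈ L₂, ∀ y ∈ L₂, ∃ n : ℤ, B₂ x y = (n : ℚ))
    (heven₁ : ∀ x ∈ L₁, ∃ n : ℤ, B₁ x x = 2 * (n : ℚ))
    (heven₂ : ∀ x ∈ L₂, ∃ n : ℤ, B₂ x x = 2 * (n : ℚ))
    (ψ : V₁ → V₂)
    (hψmap : ∀ v ∈ dualSet B₁ L₁, ψ v ∈ dualSet B₂ L₂)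
    (hψadd : ∀ v ∈ dualSet B₁ L₁, ∀ w ∈ dualSet B₁ L₁, ψ (v + w) - ψ v - ψ w ∈ L₂)
    (hψinj : ∀ v ∈ dualSet B₁ L₁, (ψ v ∈ L₂ ↔ v ∈ L₁))
    (hψsurj : ∀ w ∈ dualSet B₂ L₂, ∃ v ∈ dualSet B₁ L₁, ψ v - w ∈ L₂)
    (hψq : ∀ v ∈ dualSet B₁ L₁, ∃ n : ℤ, B₂ (ψ v) (ψ v) - B₁ v v = 2 * (n : ℚ)) :
    ∀ x ∈ dualSet B₁ L₁, ∀ y ∈ dualSet B₂ L₂, ψ x - y ∈ L₂ →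
      ∃ n : ℤ, -B₁ x x + B₂ y y = 2 * (n : ℚ) :=
  stmt_4_general V₁ V₂ B₁ B₂ hsym₂ L₁ L₂ heven₂ ψ hψmap hψq
end

section
/- If L is an even positive definite lattice of rank d that embeds primitively into the E₈ root lattice, and the discriminant group D(L) requires a minimum of ℓ generators, then 8 − d ≥ ℓ. -/
/-- `S` is a generating set for the discriminant group `D(L) = L∨/L`. -/
def GeneratesDisc {V : Type*} [AddCommGroup V] [Module ℚ V]
    (B : V →ₗ[ℚ] V →ₗ[ℚ] ℚ) (L : Submodule ℤ V) (S : Finset V) : Prop :=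
  (S : Set V) ⊆ dualSet B L ∧
    ∀ v ∈ dualSet B L, ∃ c : V → ℤ, v - (∑ r ∈ S, c r • r) ∈ L

/-!
Smith normal form, together with primitivity of `L`, gives a `ℤ`-basis `e` of `Λ` of which a
subfamily `(e i)_{i ∈ s}` is a `ℤ`-basis of `L`; thus `#s = d` and `8 - d` basis vectors remain.
Because `Λ` is unimodular, every integral functional on `L` is the restriction of `B w` for some
`w = ∑ cⱼ eⱼ ∈ Λ`, so every `v ∈ L∨` is the `B`-orthogonal projection `π w` of a lattice vector onto
`span ℚ L`. Since `π eᵢ = eᵢ ∈ L` for `i ∈ s`, we get `v ≡ ∑_{j ∉ s} cⱼ π eⱼ` modulo `L`: the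
`8 - d` vectors `π eⱼ` generate `D(L)`.
-/

open Submodule Set

namespace LinearMap.BilinForm

variable {K V : Type*} [Field K] [AddCommGroup V] [Module K V] {B : LinearMap.BilinForm K V}

theorem nondegenerate_of_anisotropic [FiniteDimensional K V]
    (hB : B.toQuadraticMap.Anisotropic) : B.Nondegenerate :=
  .ofSeparatingLeft (separatingLeft_of_anisotropic hB)

theorem anisotropic_restrict (hB : B.toQuadraticMap.Anisotropic) (W : Submodule K V) :
    (B.restrict W).toQuadraticMap.Anisotropic :=
  fun x hx => Subtype.ext (hB x hx)

theorem exists_linearMap_apply_eq [FiniteDimensional K V] (hB : B.toQuadraticMap.Anisotropic)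
    (W : Submodule K V) : ∃ π : V →ₗ[K] W, ∀ v, ∀ y ∈ W, B (π v) y = B v y := by
  let T := (B.restrict W).toDual (nondegenerate_of_anisotropic (anisotropic_restrict hB W))
  refine ⟨T.symm.toLinearMap ∘ₗ B.compl₂ W.subtype, fun v y hy => ?_⟩
  exact congr($(T.apply_symm_apply (B.compl₂ W.subtype v)) ⟨y, hy⟩)

theorem eq_of_mem_of_forall_apply_eq (hB : B.toQuadraticMap.Anisotropic) {W : Submodule K V}
    {v v' : V} (hv : v ∈ W) (hv' : v' ∈ W) (h : ∀ y ∈ W, B v y = B v' y) : v = v' :=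
  sub_eq_zero.mp <| hB _ <| by
    simp [BilinMap.toQuadraticMap_apply, h _ (W.sub_mem hv hv')]

theorem isLattice_of_le_dualSubmodule {R : Type*} [CommRing R] [IsNoetherianRing R]
    [Algebra R K] [Module R V] [IsScalarTower R K V] [FiniteDimensional K V]
    (hB : B.Nondegenerate) {Λ : Submodule R V} (hspan : span K (Λ : Set V) = ⊤)
    (hint : Λ ≤ B.dualSubmodule Λ) : Λ.IsLattice K := by
  classical
  obtain ⟨t, htΛ, htspan, htli⟩ := exists_linearIndependent K (Λ : Set V)
  let bt : Module.Basis t K V := .mk htli (by simp [htspan, hspan])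
  have : Finite t := Module.Finite.finite_basis bt
  have hle : Λ ≤ span R (Set.range (B.dualBasis hB bt)) := by
    rw [← dualSubmodule_span_of_basis B hB bt]
    refine fun x hx y hy => hint hx y (span_le.mpr ?_ hy)
    rintro _ ⟨i, rfl⟩
    simpa [bt] using htΛ i.2
  exact ⟨(fg_span (finite_range _)).of_le hle, hspan⟩

end LinearMap.BilinForm

theorem Submodule.span_range_coe_basis {R M ι : Type*} [Semiring R] [AddCommMonoid M]
    [Module R M] {N : Submodule R M} (b : Module.Basis ι R N) :
    span R (range fun i => (b i : M)) = N := by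
  have := congrArg (map N.subtype) b.span_eq
  rwa [map_span, ← range_comp, map_top, range_subtype] at this

theorem Submodule.exists_basis_eq_span_image {R M ι : Type*} [CommRing R] [IsDomain R]
    [IsPrincipalIdealRing R] [AddCommGroup M] [Module R M] [Fintype ι] (b₀ : Module.Basis ι R M)
    {N : Submodule R M} (hN : ∀ (r : R) (x : M), r ≠ 0 → r • x ∈ N → x ∈ N) :
    ∃ (b : Module.Basis ι R M) (s : Finset ι), N = span R (b '' s) := by
  obtain ⟨n, snf⟩ := N.smithNormalForm b₀
  refine ⟨snf.bM, Finset.univ.map snf.f, le_antisymm ?_ ?_⟩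
  · conv_lhs => rw [← span_range_coe_basis snf.bN]
    refine span_le.mpr ?_
    rintro _ ⟨i, rfl⟩
    simp only [SetLike.mem_coe, snf.snf i]
    exact smul_mem _ _ (subset_span ⟨snf.f i, by simp, rfl⟩)
  · refine span_le.mpr ?_
    rintro _ ⟨_, hj, rfl⟩
    obtain ⟨i, -, rfl⟩ := Finset.mem_map.mp hj
    have ha : snf.a i ≠ 0 := fun h => snf.bN.ne_zero i (Subtype.ext (by simp [snf.snf i, h]))
    exact hN _ _ ha (snf.snf i ▸ (snf.bN i).2)

theorem Module.Basis.finrank_span_image {K V ι : Type*} [DivisionRing K] [AddCommGroup V]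
    [Module K V] (e : Module.Basis ι K V) (s : Finset ι) :
    Module.finrank K (span K (e '' s)) = s.card := by
  rw [image_eq_range]
  exact (finrank_span_eq_card (e.linearIndependent.comp _ Subtype.val_injective)).trans
    (Fintype.card_coe s)

section Discriminant

variable {V : Type*} [AddCommGroup V] [Module ℚ V] {B : LinearMap.BilinForm ℚ V}

theorem mem_dualSet_iff {L : Submodule ℤ V} {v : V} :
    v ∈ dualSet B L ↔ v ∈ span ℚ (L : Set V) ∧ v ∈ B.dualSubmodule L := by
  simp only [dualSet, mem_ofPred_eq, LinearMap.BilinForm.mem_dualSubmodule, Submodule.mem_one,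
    eq_intCast, eq_comm]

theorem generatesDisc_image {ι : Type*} [DecidableEq V] {L : Submodule ℤ V} {J : Finset ι}
    {g : ι → V} (hg : ∀ j ∈ J, g j ∈ dualSet B L)
    (hgen : ∀ v ∈ dualSet B L, ∃ c : ι → ℤ, v - ∑ j ∈ J, c j • g j ∈ L) :
    GeneratesDisc B L (J.image g) := by
  refine ⟨by simpa [Set.subset_def] using hg, fun v hv => ?_⟩
  obtain ⟨c, hc⟩ := hgen v hv
  refine ⟨fun r => ∑ j ∈ J with g j = r, c j, ?_⟩
  rwa [Finset.sum_image' (fun j => c j • g j) fun j _ => by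
    rw [Finset.sum_smul]
    exact Finset.sum_congr rfl fun k hk => by rw [(Finset.mem_filter.mp hk).2]]

variable {ι : Type*} [Fintype ι] [DecidableEq ι]

theorem exists_sum_apply_eq_of_mem_dualSubmodule (hB : B.Nondegenerate) (e : Module.Basis ι ℚ V)
    (hunimod : B.dualSubmodule (span ℤ (range e)) ≤ span ℤ (range e)) {s : Finset ι} {v : V}
    (hv : v ∈ B.dualSubmodule (span ℤ (e '' s))) :
    ∃ c : ι → ℤ, ∀ i ∈ s, B (∑ j, c j • e j) (e i) = B v (e i) := by
  have hint : ∀ i ∈ s, ∃ n : ℤ, (n : ℚ) = B v (e i) := fun i hi => by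
    simpa using mem_one.mp (hv _ (subset_span ⟨i, hi, rfl⟩))
  choose! n hn using hint
  have hw : ∑ i ∈ s, n i • B.dualBasis hB e i ∈ span ℤ (range e) := by
    refine hunimod ?_
    rw [LinearMap.BilinForm.dualSubmodule_span_of_basis B hB e]
    exact sum_mem fun i _ => smul_mem _ _ (subset_span ⟨i, rfl⟩)
  obtain ⟨c, hc⟩ := (mem_span_range_iff_exists_fun ℤ).mp hw
  refine ⟨c, fun i hi => ?_⟩
  simp [hc, ← hn i hi, LinearMap.BilinForm.apply_dualBasis_left, hi]

theorem exists_generatesDisc_card_le [FiniteDimensional ℚ V] (hB : B.toQuadraticMap.Anisotropic)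
    (e : Module.Basis ι ℚ V) (hunimod : B.dualSubmodule (span ℤ (range e)) = span ℤ (range e))
    (s : Finset ι) : ∃ S : Finset V, GeneratesDisc B (span ℤ (e '' s)) S ∧ S.card ≤ sᶜ.card := by
  classical
  set L := span ℤ (e '' s)
  set W := span ℚ (e '' s)
  have hW : span ℚ (L : Set V) = W := span_span_of_tower ℤ ℚ _
  have hLΛ : L ≤ span ℤ (range e) := span_mono (image_subset_range _ _)
  obtain ⟨π, hπ⟩ := LinearMap.BilinForm.exists_linearMap_apply_eq hB W
  have hπ_eq : ∀ x ∈ W, (π x : V) = x := fun x hx =>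
    LinearMap.BilinForm.eq_of_mem_of_forall_apply_eq hB (π x).2 hx (hπ x)
  refine ⟨sᶜ.image fun j => (π (e j) : V), generatesDisc_image (fun j _ => ?_) (fun v hv => ?_),
    Finset.card_image_le⟩
  · rw [mem_dualSet_iff, hW]
    refine ⟨(π _).2, fun x hx => ?_⟩
    rw [hπ _ x (hW ▸ subset_span hx)]
    exact hunimod.ge (subset_span ⟨j, rfl⟩) x (hLΛ hx)
  · rw [mem_dualSet_iff, hW] at hv
    obtain ⟨c, hc⟩ := exists_sum_apply_eq_of_mem_dualSubmodule
      (LinearMap.BilinForm.nondegenerate_of_anisotropic hB) e hunimod.le hv.2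
    refine ⟨c, ?_⟩
    have hv_eq : v = π (∑ j, c j • e j) := by
      refine LinearMap.BilinForm.eq_of_mem_of_forall_apply_eq hB hv.1 (π _).2 fun y hy => ?_
      rw [hπ _ y hy]
      refine (LinearMap.eqOn_span' (f := B v) (g := B _) ?_ hy)
      rintro _ ⟨i, hi, rfl⟩
      exact (hc i hi).symm
    have hsplit : (π (∑ j, c j • e j) : V) =
        ∑ j ∈ s, c j • e j + ∑ j ∈ sᶜ, c j • (π (e j) : V) := by
      rw [map_sum, coe_sum, ← Finset.sum_add_sum_compl s]
      congr 1
      · exact Finset.sum_congr rfl fun j hj => by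
          rw [map_zsmul, coe_smul_of_tower, hπ_eq _ (subset_span ⟨j, hj, rfl⟩)]
      · exact Finset.sum_congr rfl fun j _ => by rw [map_zsmul, coe_smul_of_tower]
    rw [hv_eq, hsplit, add_sub_cancel_right]
    exact sum_mem fun j hj => smul_mem _ _ (subset_span ⟨j, hj, rfl⟩)

end Discriminant

theorem stmt_14_general (V : Type*) [AddCommGroup V] [Module ℚ V] [FiniteDimensional ℚ V]
    (hdim : Module.finrank ℚ V = 8)
    (B : V →ₗ[ℚ] V →ₗ[ℚ] ℚ)
    (hpos : ∀ v : V, v ≠ 0 → 0 < B v v)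
    (Λ : Submodule ℤ V) (hspan : Submodule.span ℚ (Λ : Set V) = ⊤)
    (hunimod : dualSet B Λ = (Λ : Set V))
    (L : Submodule ℤ V) (hLΛ : L ≤ Λ)
    (hprim : ∀ x ∈ Λ, ∀ n : ℤ, n ≠ 0 → n • x ∈ L → x ∈ L)
    (d : ℕ) (hrank : Module.finrank ℚ (Submodule.span ℚ (L : Set V)) = d)
    (ℓ : ℕ)
    (hℓmin : ∀ S : Finset V, GeneratesDisc B L S → ℓ ≤ S.card) :
    ℓ ≤ 8 - d := by
  classical
  have hanis : (LinearMap.BilinMap.toQuadraticMap B).Anisotropic :=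
    QuadraticMap.PosDef.anisotropic hpos
  have hself : LinearMap.BilinForm.dualSubmodule B Λ = Λ := by
    ext v
    simpa [mem_dualSet_iff, hspan] using congr(v ∈ $hunimod)
  have : Λ.IsLattice ℚ := LinearMap.BilinForm.isLattice_of_le_dualSubmodule
    (LinearMap.BilinForm.nondegenerate_of_anisotropic hanis) hspan hself.ge
  obtain ⟨b, s, hs⟩ := exists_basis_eq_span_image (Module.Free.chooseBasis ℤ Λ)
    (N := L.comap Λ.subtype) fun n x hn hx => hprim x x.2 n hn hx
  set e := b.extendOfIsLattice ℚ
  have he : ⇑e = fun i => (b i : V) := funext (b.extendOfIsLattice_apply ℚ)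
  have hΛ : span ℤ (range e) = Λ := by rw [he, span_range_coe_basis]
  have hL : span ℤ (e '' s) = L := by
    rw [← inf_eq_right.mpr hLΛ, ← map_comap_subtype, hs, map_span, image_image, he]
    rfl
  have hcard : Fintype.card (Module.Free.ChooseBasisIndex ℤ Λ) = 8 := by
    rw [← hdim, Module.finrank_eq_card_basis e]
  have hd : s.card = d := by rw [← hrank, ← hL, span_span_of_tower, e.finrank_span_image]
  obtain ⟨S, hS, hScard⟩ := exists_generatesDisc_card_le hanis e (by rwa [hΛ]) s
  calc ℓ ≤ S.card := hℓmin S (hL ▸ hS)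
    _ ≤ sᶜ.card := hScard
    _ = 8 - d := by rw [Finset.card_compl, hcard, hd]

/-- Nikulin (special case of Theorem 1.12.2): if an even positive definite lattice `L`
of rank `d` embeds primitively into `E₈` (the unique even unimodular positive definite
lattice of rank `8`), and `D(L)` requires a minimum of `ℓ` generators, then `8 - d ≥ ℓ`. -/
theorem stmt_14 (V : Type*) [AddCommGroup V] [Module ℚ V] [FiniteDimensional ℚ V]
    (hdim : Module.finrank ℚ V = 8)
    (B : V →ₗ[ℚ] V →ₗ[ℚ] ℚ) (hsym : ∀ x y, B x y = B y x)
    (hpos : ∀ v : V, v ≠ 0 → 0 < B v v)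
    (Λ : Submodule ℤ V) (hspan : Submodule.span ℚ (Λ : Set V) = ⊤)
    (hintΛ : ∀ x ∈ Λ, ∀ y ∈ Λ, ∃ n : ℤ, B x y = (n : ℚ))
    (hevenΛ : ∀ x ∈ Λ, ∃ n : ℤ, B x x = 2 * (n : ℚ))
    (hunimod : dualSet B Λ = (Λ : Set V))
    (L : Submodule ℤ V) (hLΛ : L ≤ Λ)
    (hprim : ∀ x ∈ Λ, ∀ n : ℤ, n ≠ 0 → n • x ∈ L → x ∈ L)
    (d : ℕ) (hrank : Module.finrank ℚ (Submodule.span ℚ (L : Set V)) = d)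
    (ℓ : ℕ)
    (hℓex : ∃ S : Finset V, GeneratesDisc B L S ∧ S.card = ℓ)
    (hℓmin : ∀ S : Finset V, GeneratesDisc B L S → ℓ ≤ S.card) :
    ℓ ≤ 8 - d :=
  stmt_14_general V hdim B hpos Λ hspan hunimod L hLΛ hprim d hrank ℓ hℓmin
end
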